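/- Let (M, →) be a transition system and let P₁, P₂, Q ⊆ M be state predicates. If (M, →) ⊨∀ P₁ ⇒ Q and (M, →) ⊨∀ P₂ ⇒ Q, then (M, →) ⊨∀ (P₁ ∪ P₂) ⇒ Q. -/

import Mathlib

/-! Demonic validity is closed under arbitrary unions, by coinduction: the predicates that are
covered by valid subpredicates form a post-fixed point of `DVP̂`, because a state of `P \ Q`
lying in a valid `A ⊆ P` has successors, and these lie in the valid predicate `∂(A \ Q)`,
which is contained in `∂(P \ Q)`. -/

variable {M : Type*}

/-- `P` is runnable: `P ≠ ∅` and every state in `P` has a successor. -/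
def Runnable (R : M → M → Prop) (P : Set M) : Prop :=
  P ≠ ∅ ∧ ∀ γ ∈ P, ∃ γ', R γ γ'

/-- The derivative `∂(P)` of a state predicate `P`. -/
def derivS (R : M → M → Prop) (P : Set M) : Set M :=
  {γ' | ∃ γ ∈ P, R γ γ'}

/-- The monotone operator `DVP̂` on sets of reachability predicates. -/
def DVPhat (R : M → M → Prop) : Set (Set M × Set M) →o Set (Set M × Set M) where
  toFun X := {pq | pq.1 ⊆ pq.2 ∨
      (Runnable R (pq.1 \ pq.2) ∧ (derivS R (pq.1 \ pq.2), pq.2) ∈ X)}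
  monotone' := by
    intro X Y hXY pq hpq
    rcases hpq with h | ⟨h1, h2⟩
    · exact Or.inl h
    · exact Or.inr ⟨h1, hXY h2⟩

/-- `(M, →) ⊨∀ P ⇒ Q` : the reachability predicate `P ⇒ Q` is demonically valid,
i.e. `(P, Q) ∈ ν DVP̂`. -/
def DemValid (R : M → M → Prop) (P Q : Set M) : Prop :=
  (P, Q) ∈ OrderHom.gfp (DVPhat R)

section

variable {R : M → M → Prop} {P Q : Set M}

theorem derivS_mono {A B : Set M} (h : A ⊆ B) : derivS R A ⊆ derivS R B :=
  fun _ ⟨γ, hγ, hR⟩ ↦ ⟨γ, h hγ, hR⟩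

theorem demValid_iff :
    DemValid R P Q ↔ P ⊆ Q ∨ (Runnable R (P \ Q) ∧ DemValid R (derivS R (P \ Q)) Q) := by
  unfold DemValid
  conv_lhs => rw [← OrderHom.map_gfp]
  rfl

theorem demValid_of_subset (h : P ⊆ Q) : DemValid R P Q :=
  demValid_iff.2 (Or.inl h)

/-- When `P ⊆ Q`, both conjuncts hold because `P \ Q = ∅`. -/
theorem DemValid.total_and_derivS (h : DemValid R P Q) :
    (∀ γ ∈ P \ Q, ∃ γ', R γ γ') ∧ DemValid R (derivS R (P \ Q)) Q := by
  rcases demValid_iff.1 h with hPQ | ⟨hrun, hderiv⟩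
  · have hempty : P \ Q = ∅ := Set.sdiff_eq_empty.2 hPQ
    refine ⟨by simp [hempty], demValid_of_subset ?_⟩
    rintro _ ⟨γ, hγ, -⟩
    simp [hempty] at hγ
  · exact ⟨hrun.2, hderiv⟩

theorem DemValid.coinduct (S : Set (Set M))
    (hS : ∀ P ∈ S, (∀ γ ∈ P \ Q, ∃ γ', R γ γ') ∧ derivS R (P \ Q) ∈ S) (hP : P ∈ S) :
    DemValid R P Q := by
  refine OrderHom.le_gfp (DVPhat R) (a := {pq | pq.1 ∈ S ∧ pq.2 = Q}) ?_ ⟨hP, rfl⟩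
  rintro ⟨P', Q'⟩ ⟨hP', hQ' : Q' = Q⟩
  subst Q'
  obtain ⟨htotal, hderiv⟩ := hS P' hP'
  by_cases hPQ : P' ⊆ Q
  · exact Or.inl hPQ
  · exact Or.inr ⟨⟨fun h ↦ hPQ (Set.sdiff_eq_empty.1 h), htotal⟩, hderiv, rfl⟩

theorem demValid_of_forall_mem (h : ∀ γ ∈ P, ∃ A ⊆ P, γ ∈ A ∧ DemValid R A Q) :
    DemValid R P Q := by
  refine DemValid.coinduct {P | ∀ γ ∈ P, ∃ A ⊆ P, γ ∈ A ∧ DemValid R A Q} ?_ h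
  intro P hP
  constructor
  · rintro γ ⟨hγP, hγQ⟩
    obtain ⟨A, -, hγA, hA⟩ := hP γ hγP
    exact hA.total_and_derivS.1 γ ⟨hγA, hγQ⟩
  · rintro γ' ⟨γ, ⟨hγP, hγQ⟩, hR⟩
    obtain ⟨A, hAP, hγA, hA⟩ := hP γ hγP
    exact ⟨derivS R (A \ Q), derivS_mono (Set.sdiff_subset_sdiff_left hAP),
      ⟨γ, ⟨hγA, hγQ⟩, hR⟩, hA.total_and_derivS.2⟩

theorem demValid_sUnion {𝒜 : Set (Set M)} (h : ∀ P ∈ 𝒜, DemValid R P Q) :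
    DemValid R (⋃₀ 𝒜) Q :=
  demValid_of_forall_mem fun _ ⟨A, hA𝒜, hγA⟩ ↦ ⟨A, Set.subset_sUnion_of_mem hA𝒜, hγA, h A hA𝒜⟩

end

/-- The union of two demonically valid predicates with the same target is valid. -/
theorem demValid_union (M : Type*) (R : M → M → Prop) (P₁ P₂ Q : Set M)
    (h₁ : DemValid R P₁ Q) (h₂ : DemValid R P₂ Q) : DemValid R (P₁ ∪ P₂) Q := by
  rw [← Set.sUnion_pair]
  exact demValid_sUnion (by simp [h₁, h₂])
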